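/- arXiv:2407.14347 — 2 statements merged into one kernel-verified Lean document; each statement's English description precedes it below -/
import Mathlib

section
/- Let θ : ℝ^d × G → ℝ^d be a polynomial right action of a Lie group G on ℝ^d (each θ_v : x ↦ θ(x,v) is a polynomial diffeomorphism with inverse θ_{v⁻¹}, depending polynomially on coordinates of v). Then for every v ∈ G the Jacobian determinant det(D_x θ_v) equals 1 for all x. -/
/-!
The Jacobian determinant `J(x, v)` of `θ_v` is a polynomial in `(x, v)`. Differentiating
`θ_{v⁻¹} ∘ θ_v = id` gives `J(θ(x, v), v⁻¹) * J(x, v) = 1`, and the first factor is again a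
polynomial in `(x, v)`. So `J` is a unit of the polynomial ring over the infinite domain `ℝ`,
hence a constant, and its value at `v = e` is `det 1 = 1`.
-/

open MvPolynomial

section Calculus

variable {𝕜 : Type*} [NontriviallyNormedField 𝕜]

theorem hasFDerivAt_sumElim_const {κ ι : Type*} [Fintype κ] (v : ι → 𝕜) (x : κ → 𝕜) :
    HasFDerivAt (fun x => Sum.elim x v) (ContinuousLinearMap.pi
      (Sum.elim (fun j => ContinuousLinearMap.proj j) fun _ => 0 :
        κ ⊕ ι → (κ → 𝕜) →L[𝕜] 𝕜)) x := by
  refine hasFDerivAt_pi.2 fun s => ?_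
  cases s with
  | inl j => exact hasFDerivAt_apply j x
  | inr k => exact hasFDerivAt_const (v k) x

theorem det_of_fderiv_apply_single_eq_det {κ : Type*} [Fintype κ] [DecidableEq κ]
    {f : (κ → 𝕜) → κ → 𝕜} {x : κ → 𝕜} (hf : DifferentiableAt 𝕜 f x) :
    (Matrix.of fun i j => fderiv 𝕜 (fun x' => f x' i) x (Pi.single j 1)).det =
      LinearMap.det (fderiv 𝕜 f x : (κ → 𝕜) →ₗ[𝕜] κ → 𝕜) := by
  rw [← LinearMap.det_toMatrix']
  congr 1
  ext i j
  rw [Matrix.of_apply, LinearMap.toMatrix'_apply, (hasFDerivAt_pi'.1 hf.hasFDerivAt i).fderiv]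
  rfl

theorem det_fderiv_mul_det_fderiv_of_leftInverse {E : Type*} [NormedAddCommGroup E]
    [NormedSpace 𝕜 E] {f g : E → E} {x : E} (hgf : Function.LeftInverse g f)
    (hg : DifferentiableAt 𝕜 g (f x)) (hf : DifferentiableAt 𝕜 f x) :
    LinearMap.det (fderiv 𝕜 g (f x) : E →ₗ[𝕜] E) * LinearMap.det (fderiv 𝕜 f x : E →ₗ[𝕜] E) =
      1 := by
  rw [← LinearMap.det_comp, ← ContinuousLinearMap.toLinearMap_comp, ← fderiv_comp x hg hf,
    hgf.comp_eq_id, fderiv_id, ContinuousLinearMap.coe_id, LinearMap.det_id]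

end Calculus

namespace MvPolynomial

section Algebra

variable {R σ τ : Type*}

theorem exists_eval_eq_eval_comp [CommSemiring R] {f : (σ → R) → τ → R}
    (hf : ∀ t, ∃ q : MvPolynomial σ R, ∀ y, f y t = eval y q) (P : MvPolynomial τ R) :
    ∃ Q : MvPolynomial σ R, ∀ y, eval y Q = eval (f y) P := by
  choose q hq using hf
  refine ⟨bind₁ q P, fun y => ?_⟩
  change eval₂Hom (RingHom.id R) y (bind₁ q P) = _
  rw [eval₂Hom_bind₁]
  congr
  ext t
  exact (hq t y).symm

theorem eq_C_of_eval_mul_eval_eq_one [CommRing R] [IsDomain R] [Infinite R]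
    {P Q : MvPolynomial σ R} (h : ∀ y, eval y P * eval y Q = 1) : ∃ c, P = C c := by
  have hPQ : P * Q = 1 := MvPolynomial.funext fun y => by simpa using h y
  obtain ⟨c, -, hc⟩ := isUnit_iff_eq_C_of_isReduced.1 (IsUnit.of_mul_eq_one Q hPQ)
  exact ⟨c, hc⟩

end Algebra

variable {𝕜 : Type*} [NontriviallyNormedField 𝕜] {σ : Type*} [Fintype σ] [DecidableEq σ]

theorem hasFDerivAt_eval (P : MvPolynomial σ 𝕜) (y : σ → 𝕜) :
    HasFDerivAt (fun y => eval y P)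
      (∑ s, eval y (pderiv s P) • (ContinuousLinearMap.proj s : (σ → 𝕜) →L[𝕜] 𝕜)) y := by
  induction P using MvPolynomial.induction_on with
  | C a =>
    refine ((hasFDerivAt_const a y).congr_fderiv ?_).congr_of_eventuallyEq
      (.of_forall fun y => ?_)
    · ext h
      simp
    · simp
  | add P Q hP hQ =>
    refine ((hP.add hQ).congr_fderiv ?_).congr_of_eventuallyEq (.of_forall fun y => ?_)
    · ext h
      simp [add_mul, Finset.sum_add_distrib]
    · simp
  | mul_X P s hP =>
    refine ((hP.mul (hasFDerivAt_apply s y)).congr_fderiv ?_).congr_of_eventuallyEq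
      (.of_forall fun y => ?_)
    · ext h
      simp [pderiv_X, Pi.single_apply, apply_ite (eval y), add_mul, mul_assoc,
        Finset.sum_add_distrib, Finset.mul_sum]
    · simp

variable {κ ι : Type*} [Fintype κ] [DecidableEq κ] [Fintype ι] [DecidableEq ι]

theorem differentiable_eval_sumElim (P : MvPolynomial (κ ⊕ ι) 𝕜) (v : ι → 𝕜) :
    Differentiable 𝕜 fun x => eval (Sum.elim x v) P := fun x =>
  ((hasFDerivAt_eval P _).comp x (hasFDerivAt_sumElim_const v x)).differentiableAt

theorem fderiv_eval_sumElim_apply_single (P : MvPolynomial (κ ⊕ ι) 𝕜) (v : ι → 𝕜)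
    (x : κ → 𝕜) (j : κ) :
    fderiv 𝕜 (fun x => eval (Sum.elim x v) P) x (Pi.single j 1) =
      eval (Sum.elim x v) (pderiv (Sum.inl j) P) := by
  have h : HasFDerivAt (fun x => eval (Sum.elim x v) P) _ x :=
    (hasFDerivAt_eval P _).comp x (hasFDerivAt_sumElim_const v x)
  simp [h.fderiv, Pi.single_apply]

noncomputable def jacobianDet {R : Type*} [CommRing R] (p : κ → MvPolynomial (κ ⊕ ι) R) :
    MvPolynomial (κ ⊕ ι) R :=
  (Matrix.of fun i j => pderiv (Sum.inl j) (p i)).det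

theorem eval_jacobianDet (p : κ → MvPolynomial (κ ⊕ ι) 𝕜) (v : ι → 𝕜) (x : κ → 𝕜) :
    eval (Sum.elim x v) (jacobianDet p) = (Matrix.of fun i j =>
      fderiv 𝕜 (fun x => eval (Sum.elim x v) (p i)) x (Pi.single j 1)).det := by
  rw [jacobianDet, RingHom.map_det]
  congr 1
  ext i j
  simp [fderiv_eval_sumElim_apply_single]

end MvPolynomial

theorem stmt_2_general (d n : ℕ)
    (θ : (Fin d → ℝ) → (Fin n → ℝ) → (Fin d → ℝ))
    (hθpoly : ∀ i : Fin d, ∃ p : MvPolynomial (Fin d ⊕ Fin n) ℝ,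
      ∀ x v, θ x v i = eval (Sum.elim x v) p)
    (mul : (Fin n → ℝ) → (Fin n → ℝ) → (Fin n → ℝ))
    (e : Fin n → ℝ) (ι : (Fin n → ℝ) → (Fin n → ℝ))
    (hιpoly : ∀ i : Fin n, ∃ p : MvPolynomial (Fin n) ℝ, ∀ v, ι v i = eval v p)
    (hinv : ∀ v, mul v (ι v) = e ∧ mul (ι v) v = e)
    (hunit : ∀ x, θ x e = x)
    (hact : ∀ x v w, θ (θ x v) w = θ x (mul v w)) :
    ∀ (v : Fin n → ℝ) (x : Fin d → ℝ),
      Matrix.det (Matrix.of fun i j : Fin d =>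
        fderiv ℝ (fun x' => θ x' v i) x (Pi.single j 1)) = 1 := by
  choose p hp using hθpoly
  have hθ : ∀ v, (θ · v) = fun x i => eval (Sum.elim x v) (p i) := fun v => by
    ext x i; exact hp i x v
  have hθdiff : ∀ v, Differentiable ℝ (θ · v) := fun v => by
    rw [hθ v]; exact differentiable_pi.2 fun i => differentiable_eval_sumElim (p i) v
  have hJ : ∀ v x, LinearMap.det (fderiv ℝ (θ · v) x : (Fin d → ℝ) →ₗ[ℝ] Fin d → ℝ) =
      eval (Sum.elim x v) (jacobianDet p) := fun v x => by
    rw [eval_jacobianDet, ← det_of_fderiv_apply_single_eq_det (hθdiff v x)]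
    simp only [hp]
  have hJ_inv : ∀ v x,
      eval (Sum.elim (θ x v) (ι v)) (jacobianDet p) * eval (Sum.elim x v) (jacobianDet p) = 1 :=
    fun v x => by
      rw [← hJ, ← hJ]
      exact det_fderiv_mul_det_fderiv_of_leftInverse
        (fun x => by rw [hact, (hinv v).1, hunit]) (hθdiff _ _) (hθdiff _ _)
  have hcomp_poly : ∀ t, ∃ q : MvPolynomial (Fin d ⊕ Fin n) ℝ, ∀ y,
      Sum.elim (θ (y ∘ Sum.inl) (y ∘ Sum.inr)) (ι (y ∘ Sum.inr)) t = eval y q := by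
    rintro (i | k)
    · exact ⟨p i, fun y => by simpa using hp i (y ∘ Sum.inl) (y ∘ Sum.inr)⟩
    · choose r hr using hιpoly
      exact ⟨rename Sum.inr (r k), fun y => by simp [hr, eval_rename]⟩
  obtain ⟨Q, hQ⟩ := exists_eval_eq_eval_comp hcomp_poly (jacobianDet p)
  obtain ⟨c, hc⟩ := eq_C_of_eval_mul_eval_eq_one (P := jacobianDet p) (Q := Q) fun y => by
    rw [hQ, mul_comm]
    simpa using hJ_inv (y ∘ Sum.inr) (y ∘ Sum.inl)
  have hc_one : c = 1 := by
    simpa [hc, show (θ · e) = id from funext hunit] using (hJ e 0).symm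
  intro v x
  rw [det_of_fderiv_apply_single_eq_det (hθdiff v x), hJ, hc, eval_C, hc_one]

/-- For a polynomial right action `θ` of a Lie group `G` (identified with `ℝ^n`
via coordinates with polynomial group operations, unit `e`, inversion `ι`) on `ℝ^d`, the
Jacobian determinant `det (D_x θ_v)` equals `1` for all `x` and `v`. -/
theorem stmt_2 (d n : ℕ)
    (θ : (Fin d → ℝ) → (Fin n → ℝ) → (Fin d → ℝ))
    (hθpoly : ∀ i : Fin d, ∃ p : MvPolynomial (Fin d ⊕ Fin n) ℝ,
      ∀ x v, θ x v i = eval (Sum.elim x v) p)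
    (mul : (Fin n → ℝ) → (Fin n → ℝ) → (Fin n → ℝ))
    (e : Fin n → ℝ) (ι : (Fin n → ℝ) → (Fin n → ℝ))
    (hmulpoly : ∀ i : Fin n, ∃ p : MvPolynomial (Fin n ⊕ Fin n) ℝ,
      ∀ v w, mul v w i = eval (Sum.elim v w) p)
    (hιpoly : ∀ i : Fin n, ∃ p : MvPolynomial (Fin n) ℝ, ∀ v, ι v i = eval v p)
    (hinv : ∀ v, mul v (ι v) = e ∧ mul (ι v) v = e)
    (hunit : ∀ x, θ x e = x)
    (hact : ∀ x v w, θ (θ x v) w = θ x (mul v w)) :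
    ∀ (v : Fin n → ℝ) (x : Fin d → ℝ),
      Matrix.det (Matrix.of fun i j : Fin d =>
        fderiv ℝ (fun x' => θ x' v i) x (Pi.single j 1)) = 1 :=
  stmt_2_general d n θ hθpoly mul e ι hιpoly hinv hunit hact
end

section
/- For the quasi-norm ‖v‖_α = (Σ_{j=1}^n v_j^{2q/q_j})^{1/(2q)} on ℝ^n with positive integer weights q_j dividing 2q, and ⟨v⟩_α = (1 + ‖v‖_α^{2q})^{1/(2q)}, the function v ↦ ⟨v⟩_α^k is Lebesgue integrable over ℝ^n if and only if k < -(q_1 + … + q_n). -/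
/-!
Split off the first coordinate by Fubini. On each slice the substitution `x = C ^ (1/(2m)) t`
turns `∫ (C + x ^ (2m)) ^ s dx` into `C ^ (s + 1/(2m)) ∫ (1 + t ^ (2m)) ^ s dt`, and the last
integral is finite iff `s + 1/(2m) < 0`, because `(1 + t ^ (2m)) ^ s` is even and comparable
to `t ^ (2ms)` at infinity. By induction on the dimension, `v ↦ (1 + ∑ v_j ^ (2 m_j)) ^ s` is
integrable iff `s + ∑ 1/(2 m_j) < 0`; for `m_j = q / w_j` and `s = k / (2q)` this reads
`k < -∑ w_j`.
-/

open MeasureTheory Filter Asymptotics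

theorem pos_add_even_pow {C : ℝ} (hC : 0 < C) (x : ℝ) (m : ℕ) : 0 < C + x ^ (2 * m) :=
  add_pos_of_pos_of_nonneg hC ((even_two_mul m).pow_nonneg x)

theorem integrable_iff_integrableAtFilter_atTop_of_even {E : Type*} [NormedAddCommGroup E]
    {f : ℝ → E} (hf : LocallyIntegrable f) (heven : ∀ x, f (-x) = f x) :
    Integrable f ↔ IntegrableAtFilter f atTop := by
  have hbot : IntegrableAtFilter f atBot ↔ IntegrableAtFilter f atTop := by
    conv_lhs => rw [← map_neg_atTop, ← Measure.map_neg_eq_self (volume : Measure ℝ),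
      measurableEmbedding_neg.integrableAtFilter_map_iff]
    simp [Function.comp_def, heven]
  simp [integrable_iff_integrableAtFilter_atBot_atTop, hbot, hf]

theorem continuous_one_add_pow_rpow (m : ℕ) (s : ℝ) :
    Continuous fun x : ℝ => (1 + x ^ (2 * m)) ^ s :=
  (continuous_const.add (continuous_pow _)).rpow_const fun x =>
    .inl (pos_add_even_pow one_pos x m).ne'

theorem integrable_one_add_pow_rpow_iff {m : ℕ} (hm : m ≠ 0) (s : ℝ) :
    Integrable (fun x : ℝ => (1 + x ^ (2 * m)) ^ s) ↔ s + (2 * (m : ℝ))⁻¹ < 0 := by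
  have hΘ : (fun x : ℝ => (1 + x ^ (2 * m)) ^ s) =Θ[atTop] fun x => x ^ (2 * m * s) := by
    have hequiv : (fun x : ℝ => 1 + x ^ (2 * m)) ~[atTop] fun x => x ^ (2 * m) :=
      ((isLittleO_one_left_iff ℝ).2 <| by
        simpa [abs_pow, Function.comp_def] using
          (tendsto_pow_atTop (by omega)).comp tendsto_abs_atTop_atTop).add_isEquivalent
      IsEquivalent.refl
    refine (hequiv.isTheta.rpow (.of_forall fun x => (pos_add_even_pow one_pos x m).le)
      (.of_forall (even_two_mul m).pow_nonneg)).trans_eventuallyEq ?_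
    filter_upwards [eventually_ge_atTop 0] with x hx
    rw [← Real.rpow_natCast, ← Real.rpow_mul hx]
    push_cast; ring_nf
  rw [integrable_iff_integrableAtFilter_atTop_of_even
    (continuous_one_add_pow_rpow m s).locallyIntegrable
    (by simp [(even_two_mul m).neg_pow])]
  have hexp : s + (2 * (m : ℝ))⁻¹ < 0 ↔ 2 * m * s < -1 := by
    have h2m : (0 : ℝ) < 2 * m := by positivity
    rw [← mul_lt_mul_iff_right₀ h2m, mul_add, mul_inv_cancel₀ h2m.ne', mul_zero]
    constructor <;> intro h <;> linarith
  rw [hexp, ← integrableAtFilter_rpow_atTop_iff]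
  exact ⟨hΘ.isBigO_symm.integrableAtFilter
      (measurable_id.pow_const _).stronglyMeasurable.stronglyMeasurableAtFilter,
    hΘ.isBigO.integrableAtFilter
      (continuous_one_add_pow_rpow m s).aestronglyMeasurable.stronglyMeasurableAtFilter⟩

theorem add_mul_pow_rpow {C : ℝ} (hC : 0 < C) {m : ℕ} (hm : m ≠ 0) (s x : ℝ) :
    (C + (C ^ (2 * (m : ℝ))⁻¹ * x) ^ (2 * m)) ^ s = C ^ s * (1 + x ^ (2 * m)) ^ s := by
  have hroot : (C ^ (2 * (m : ℝ))⁻¹) ^ (2 * m) = C := by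
    simpa using Real.rpow_inv_natCast_pow hC.le (n := 2 * m) (by omega)
  rw [mul_pow, hroot, ← Real.mul_rpow hC.le
    (add_nonneg zero_le_one ((even_two_mul m).pow_nonneg x))]
  ring_nf

theorem integrable_add_pow_rpow_iff {C : ℝ} (hC : 0 < C) {m : ℕ} (hm : m ≠ 0) (s : ℝ) :
    Integrable (fun x : ℝ => (C + x ^ (2 * m)) ^ s) ↔ s + (2 * (m : ℝ))⁻¹ < 0 := by
  rw [← integrable_comp_mul_left_iff _ (Real.rpow_pos_of_pos hC (2 * (m : ℝ))⁻¹).ne']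
  simp only [add_mul_pow_rpow hC hm]
  rw [integrable_const_mul_iff (Real.rpow_pos_of_pos hC s).ne'.isUnit,
    integrable_one_add_pow_rpow_iff hm]

theorem integral_add_pow_rpow {C : ℝ} (hC : 0 < C) {m : ℕ} (hm : m ≠ 0) (s : ℝ) :
    ∫ x : ℝ, (C + x ^ (2 * m)) ^ s =
      C ^ (s + (2 * (m : ℝ))⁻¹) * ∫ x : ℝ, (1 + x ^ (2 * m)) ^ s := by
  have ha := Real.rpow_pos_of_pos hC (2 * (m : ℝ))⁻¹
  have hscale := Measure.integral_comp_mul_left (fun x : ℝ => (C + x ^ (2 * m)) ^ s)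
    (C ^ (2 * (m : ℝ))⁻¹)
  simp only [add_mul_pow_rpow hC hm, integral_const_mul, smul_eq_mul] at hscale
  rw [Real.rpow_add hC, mul_comm (C ^ s), mul_assoc, hscale, abs_inv, abs_of_pos ha,
    mul_inv_cancel_left₀ ha.ne']

theorem integrable_one_add_sum_pow_rpow_succ_iff {n : ℕ} (m : Fin (n + 1) → ℕ) (hm : m 0 ≠ 0)
    (s : ℝ) :
    Integrable (fun v : Fin (n + 1) → ℝ => (1 + ∑ j, v j ^ (2 * m j)) ^ s) ↔
      s + (2 * (m 0 : ℝ))⁻¹ < 0 ∧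
      Integrable (fun v : Fin n → ℝ =>
        (1 + ∑ j, v j ^ (2 * m j.succ)) ^ (s + (2 * (m 0 : ℝ))⁻¹)) := by
  set C : (Fin n → ℝ) → ℝ := fun y => 1 + ∑ j, y j ^ (2 * m j.succ)
  have hC : ∀ y, 0 < C y := fun y =>
    add_pos_of_pos_of_nonneg one_pos
      (Finset.sum_nonneg fun j _ => (even_two_mul _).pow_nonneg _)
  have hsplit := (volume_preserving_piFinSuccAbove (fun _ : Fin (n + 1) => ℝ) 0).symm
  rw [← hsplit.integrable_comp_emb (MeasurableEquiv.measurableEmbedding _)]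
  have hG : (fun v : Fin (n + 1) → ℝ => (1 + ∑ j, v j ^ (2 * m j)) ^ s) ∘
      (MeasurableEquiv.piFinSuccAbove (fun _ => ℝ) 0).symm =
      fun p : ℝ × (Fin n → ℝ) => (C p.2 + p.1 ^ (2 * m 0)) ^ s := by
    ext p
    simp only [Function.comp_apply, MeasurableEquiv.piFinSuccAbove_symm_apply,
      Fin.insertNthEquiv, Equiv.coe_fn_mk, Fin.insertNth_zero', Fin.sum_univ_succ, Fin.cons_zero,
      Fin.cons_succ, C]
    ring_nf
  have hGcont : Continuous fun p : ℝ × (Fin n → ℝ) => (C p.2 + p.1 ^ (2 * m 0)) ^ s := by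
    refine Continuous.rpow_const ?_ fun p => .inl ?_
    · fun_prop
    · exact (pos_add_even_pow (hC p.2) p.1 _).ne'
  rw [hG, Measure.volume_eq_prod, integrable_prod_iff' hGcont.aestronglyMeasurable]
  simp only [integrable_add_pow_rpow_iff (hC _) hm, eventually_const]
  refine and_congr_right fun hs => ?_
  have hJ : 0 < ∫ x : ℝ, (1 + x ^ (2 * m 0)) ^ s :=
    integral_pos_of_integrable_nonneg_nonzero (x := 0) (continuous_one_add_pow_rpow _ s)
      ((integrable_one_add_pow_rpow_iff hm s).2 hs)
      (fun x => Real.rpow_nonneg (pos_add_even_pow one_pos x _).le s)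
      (Real.rpow_pos_of_pos (pos_add_even_pow one_pos 0 _) s).ne'
  simp only [Real.norm_of_nonneg (Real.rpow_nonneg (pos_add_even_pow (hC _) _ _).le s),
    integral_add_pow_rpow (hC _) hm, integrable_mul_const_iff hJ.ne'.isUnit, C]

theorem integrable_one_add_sum_pow_rpow_iff {n : ℕ} (hn : n ≠ 0) (m : Fin n → ℕ)
    (hm : ∀ j, m j ≠ 0) (s : ℝ) :
    Integrable (fun v : Fin n → ℝ => (1 + ∑ j, v j ^ (2 * m j)) ^ s) ↔
      s + ∑ j, (2 * (m j : ℝ))⁻¹ < 0 := by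
  induction n, Nat.one_le_iff_ne_zero.2 hn using Nat.le_induction generalizing s with
  | base =>
    rw [integrable_one_add_sum_pow_rpow_succ_iff m (hm 0)]
    simp [Integrable.of_finite]
  | succ n hn₁ ih =>
    have htail : 0 ≤ ∑ j : Fin n, (2 * (m j.succ : ℝ))⁻¹ := by positivity
    rw [integrable_one_add_sum_pow_rpow_succ_iff m (hm 0),
      ih (by omega) (fun j => m j.succ) (fun j => hm _), Fin.sum_univ_succ, ← add_assoc]
    exact ⟨And.right, fun h => ⟨by linarith, h⟩⟩

/-- For the quasi-norm `‖v‖_α = (Σ_j v_j^{2q/w_j})^{1/(2q)}` on `ℝ^n` with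
positive integer weights `w j ∣ q` and `⟨v⟩_α = (1 + ‖v‖_α^{2q})^{1/(2q)}`, the function
`v ↦ ⟨v⟩_α^k` is Lebesgue integrable if and only if `k < -(w 1 + ⋯ + w n)`. -/
theorem stmt_4 (n q : ℕ) (hn : 0 < n) (hq : 0 < q) (w : Fin n → ℕ)
    (hw : ∀ j, 1 ≤ w j) (hdvd : ∀ j, w j ∣ q) (k : ℝ) :
    Integrable
      (fun v : Fin n → ℝ => (1 + ∑ j, v j ^ (2 * (q / w j))) ^ (k / (2 * (q : ℝ)))) ↔
      k < -∑ j, (w j : ℝ) := by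
  have hq' : (0 : ℝ) < 2 * q := by positivity
  have hweight : ∀ j, (2 * ((q / w j : ℕ) : ℝ))⁻¹ = w j / (2 * q) := fun j => by
    rw [Nat.cast_div (hdvd j) (by exact_mod_cast Nat.one_le_iff_ne_zero.1 (hw j))]
    field_simp
  rw [integrable_one_add_sum_pow_rpow_iff hn.ne' _
    (fun j => (Nat.div_pos (Nat.le_of_dvd hq (hdvd j)) (hw j)).ne'),
    Finset.sum_congr rfl fun j _ => hweight j, ← Finset.sum_div, ← add_div,
    div_lt_iff₀ hq', zero_mul]
  constructor <;> intro h <;> linarith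
end
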